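/- Suppose 0 < ε < 1/4. Let P be an equitable partition of the finite 𝓛-structure 𝓜 such that each part of P is ε-excellent, and let E ∈ 𝓛 have arity n. Then there is an n-ary relation E* on M such that for all tuples ⟨p_i⟩_{i<n} of parts of P, |(E Δ E*) ∩ ∏_{i<n} p_i| ≤ n·ε·∏_{i<n}|p_i|, and P is an indivisible partition of the structure (M, E*). -/

import Mathlib

open scoped Classical

noncomputable section

/-- Truth values: true, false, and indeterminate. -/
inductive TV where
  | top : TV
  | bot : TV
  | up  : TV
deriving DecidableEq

/-- A finite relational language. -/
structure RelLanguage where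
  Symb : Type
  [fintypeSymb : Fintype Symb]
  arity : Symb → ℕ

attribute [instance] RelLanguage.fintypeSymb

/-- `q_𝓛`, the maximal arity of a relation symbol. -/
def RelLanguage.q (L : RelLanguage) : ℕ := Finset.univ.sup L.arity

/-- `n_𝓛 = |𝓛| ⬝ q_𝓛`. -/
def RelLanguage.nL (L : RelLanguage) : ℕ := Fintype.card L.Symb * L.q

/-- A structure for a finite relational language, on underlying set `M`. -/
structure RelStructure (L : RelLanguage) (M : Type*) where
  rel : ∀ E : L.Symb, (Fin (L.arity E) → M) → Bool

/-- `M̂ = M ∪ 𝒫(M)`: an argument is either an element of `M` or a subset of `M`. -/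
abbrev Arg (M : Type*) := M ⊕ Finset M

/-- Membership of an element in an argument: equality for elements, membership for sets. -/
def Arg.mem {M : Type*} (a : M) : Arg M → Prop
  | Sum.inl b => a = b
  | Sum.inr s => a ∈ s

/-- The size of an argument: `1` for an element, the cardinality for a set. -/
def Arg.size {M : Type*} : Arg M → ℕ
  | Sum.inl _ => 1
  | Sum.inr s => s.card

variable {M : Type*} [Fintype M] [DecidableEq M]

/-- The ε-partial relation `Ê^m̄_ε`, where the list of indices is given in
*polling order*: the head of the list is the index polled first (outermost),
i.e. the list is the *reverse* of the tuple `m̄` of the paper. -/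
def pollAux (ε : ℝ) {n : ℕ} (R : (Fin n → M) → Bool) :
    List (Fin n) → (Fin n → Arg M) → TV
  | [], A =>
      if h : ∃ f : Fin n → M, ∀ i, A i = Sum.inl (f i) then
        (if R (Classical.choose h) then TV.top else TV.bot)
      else TV.up
  | j :: rest, A =>
      match A j with
      | Sum.inl _ => TV.up
      | Sum.inr Aj =>
          if (((Aj.filter fun a =>
                pollAux ε R rest (Function.update A j (Sum.inl a)) = TV.top).card : ℝ)
              > (1 - ε) * (Aj.card : ℝ)) then TV.top
          else if (((Aj.filter fun a =>
                pollAux ε R rest (Function.update A j (Sum.inl a)) = TV.bot).card : ℝ)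
              > (1 - ε) * (Aj.card : ℝ)) then TV.bot
          else TV.up

/-- The ε-partial relation `Ê^m̄_ε`, with `m̄` given in the paper's order
(the *last* entry of `m̄` is the index polled first). -/
def partialRel (ε : ℝ) {n : ℕ} (R : (Fin n → M) → Bool)
    (mbar : List (Fin n)) (A : Fin n → Arg M) : TV :=
  pollAux ε R mbar.reverse A

/-- The value `Ê^{⟨σ⁻¹(l-1),…,σ⁻¹(1),σ⁻¹(0)⟩}_ε (A_{σ(0)}, …, A_{σ(n-1)})`. -/
def pollValue (ε : ℝ) {n : ℕ} (R : (Fin n → M) → Bool) (l : ℕ)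
    (σ : Equiv.Perm (Fin n)) (A : Fin n → Arg M) : TV :=
  pollAux ε R (((List.finRange n).take l).map σ.symm) fun i => A (σ i)

/-- `(ε, ℓ, E)`-goodness of an argument, for the relation `R` interpreting `E`. -/
def IsGood (ε : ℝ) {n : ℕ} (R : (Fin n → M) → Bool) : ℕ → Arg M → Prop
  | 0, A₀ => A₀.isLeft = true
  | (m+1), A₀ =>
      (∀ k, 1 ≤ k → k < m + 1 → IsGood ε R k A₀) ∧
      (∀ (A : Fin n → Arg M) (σ : Equiv.Perm (Fin n)),
        (∀ i : Fin n, (i : ℕ) = 0 → A i = A₀) →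
        (∀ i : Fin n, 1 ≤ (i : ℕ) → (i : ℕ) < m + 1 →
            (A i).isRight = true ∧ IsGood ε R (m + 1 - (i : ℕ)) (A i)) →
        (∀ i : Fin n, m + 1 ≤ (i : ℕ) → (A i).isLeft = true) →
        pollValue ε R (m + 1) σ A ≠ TV.up)
  termination_by l _ => l
  decreasing_by all_goals omega

/-- `A` is ε-excellent: `(ε, arity(E), E)`-good for every relation symbol `E`. -/
def IsExcellent (ε : ℝ) {L : RelLanguage} (𝓜 : RelStructure L M) (A : Arg M) : Prop :=
  ∀ E : L.Symb, IsGood ε (𝓜.rel E) (L.arity E) A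

/-- `P` is a partition of the finite set `S`. -/
def IsPartition {V : Type*} [DecidableEq V] (P : Finset (Finset V)) (S : Finset V) : Prop :=
  (∀ p ∈ P, p.Nonempty) ∧
  (∀ p ∈ P, ∀ q ∈ P, p ≠ q → Disjoint p q) ∧
  (∀ x, x ∈ S ↔ ∃ p ∈ P, x ∈ p)

/-- A partition is equitable when any two parts differ in size by at most 1. -/
def IsEquitable {V : Type*} (P : Finset (Finset V)) : Prop :=
  ∀ p ∈ P, ∀ q ∈ P, p.card ≤ q.card + 1

/-- Indivisibility of a partition with respect to a single relation. -/
def IndivisibleRel {n : ℕ} (P : Finset (Finset M)) (R : (Fin n → M) → Bool) : Prop :=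
  ∀ p : Fin n → Finset M, (∀ i, p i ∈ P) →
    ∀ a b : Fin n → M, (∀ i, a i ∈ p i) → (∀ i, b i ∈ p i) → R a = R b

/-- Indivisibility of a partition with respect to a structure. -/
def Indivisible {L : RelLanguage} (P : Finset (Finset M)) (𝓝 : RelStructure L M) : Prop :=
  ∀ E : L.Symb, IndivisibleRel P (𝓝.rel E)

/-- The τ-branching property for an `n`-ary relation `R` with the variable partition
`(x_ℓ; the remaining variables)`. -/
def RelBranching {n : ℕ} (R : (Fin n → M) → Bool) (ℓ : Fin n) (τ : ℕ) : Prop :=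
  ∃ (a : List Bool → M) (b : List Bool → (Fin n → M)),
    ∀ i : List Bool, i.length = τ →
      ∀ j : List Bool, j.length < τ → ∀ h : Bool,
        (j ++ [h]) <+: i → (R (Function.update (b j) ℓ (a i)) = h)

/-- `𝓜` does not have the τ-branching property (for any relation symbol and
any singleton variable partition). -/
def NonBranching {L : RelLanguage} (𝓜 : RelStructure L M) (τ : ℕ) : Prop :=
  ∀ (E : L.Symb) (j : Fin (L.arity E)), ¬ RelBranching (𝓜.rel E) j τ

/-- `g = ⌈5 ⬝ n_𝓛 ⬝ τ̂ ⬝ log₂ τ̂⌉`. -/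
def gBound (L : RelLanguage) (τ : ℕ) : ℕ :=
  ⌈5 * (L.nL : ℝ) * (τ : ℝ) * Real.logb 2 (τ : ℝ)⌉₊

/-- A staircase `⟨m_j⟩_{j ≤ k}`. -/
def Staircase (ε : ℝ) (ms : ℕ → ℕ) (k : ℕ) : Prop :=
  (∀ j ≤ k, 0 < ms j) ∧ ∀ j < k, (ms (j + 1) : ℝ) ≤ ε * (ms j : ℝ)

end

/-!
If a poll along the list of coordinates `l` returns a definite value `v`, then at most an
`|l|·ε` fraction of the box of tuples disagrees with `v`: all but an ε-fraction of the values of the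
coordinate polled first lead to sub-polls returning `v`, which by induction contribute at most
`(|l| - 1)·ε` of their slices, and the exceptional ε-fraction contributes at most its full slices.
Excellence of the parts makes the full poll of any tuple of parts definite, so letting `E*` hold at
a tuple exactly when the poll of its tuple of parts is `⊤` gives a relation that is constant on
products of parts and differs from `E` on few tuples of each.
-/

def TV.ofBool : Bool → TV
  | true => .top
  | false => .bot

lemma TV.exists_ofBool_eq {t : TV} (ht : t ≠ .up) : ∃ v, TV.ofBool v = t := by
  cases t
  exacts [⟨true, rfl⟩, ⟨false, rfl⟩, absurd rfl ht]

lemma TV.decide_ofBool_eq_top (v : Bool) : decide (TV.ofBool v = .top) = v := by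
  cases v <;> rfl

section Box

variable {M : Type*} {n : ℕ}

def Arg.toFinset : Arg M → Finset M
  | Sum.inl b => {b}
  | Sum.inr s => s

def box (A : Fin n → Arg M) : Finset (Fin n → M) :=
  Fintype.piFinset fun i => (A i).toFinset

lemma card_box_update_inl (A : Fin n → Arg M) (j : Fin n) (b : M) :
    (box (Function.update A j (.inl b))).card = ∏ i ∈ Finset.univ.erase j, (A i).toFinset.card := by
  rw [box, Fintype.card_piFinset, ← Finset.mul_prod_erase _ _ (Finset.mem_univ j),
    Function.update_self, Arg.toFinset, Finset.card_singleton, one_mul]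
  refine Finset.prod_congr rfl fun i hi => ?_
  rw [Function.update_of_ne (Finset.ne_of_mem_erase hi)]

lemma card_box_of_eq_inr {A : Fin n → Arg M} {j : Fin n} {Aj : Finset M} (hj : A j = .inr Aj) :
    (box A).card = Aj.card * ∏ i ∈ Finset.univ.erase j, (A i).toFinset.card := by
  rw [box, Fintype.card_piFinset, ← Finset.mul_prod_erase _ _ (Finset.mem_univ j), hj, Arg.toFinset]

lemma card_filter_box_eq_sum {A : Fin n → Arg M} {j : Fin n} {Aj : Finset M}
    (hj : A j = .inr Aj) (S : (Fin n → M) → Prop) [DecidablePred S] :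
    ((box A).filter S).card = ∑ b ∈ Aj, ((box (Function.update A j (.inl b))).filter S).card := by
  rw [Finset.card_eq_sum_card_fiberwise (f := fun a => a j) (t := Aj)]
  · refine Finset.sum_congr rfl fun b hb => congrArg Finset.card ?_
    ext a
    simp only [box, Finset.mem_filter, Fintype.mem_piFinset]
    constructor
    · rintro ⟨⟨ha, hS⟩, rfl⟩
      refine ⟨fun i => ?_, hS⟩
      rcases eq_or_ne i j with rfl | hij
      · simp [Arg.toFinset]
      · rw [Function.update_of_ne hij]; exact ha i
    · rintro ⟨ha, hS⟩
      have hab : a j = b := by simpa [Arg.toFinset] using ha j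
      refine ⟨⟨fun i => ?_, hS⟩, hab⟩
      rcases eq_or_ne i j with rfl | hij
      · rw [hj, Arg.toFinset, hab]; exact hb
      · simpa [Function.update_of_ne hij] using ha i
  · intro a ha
    have := (Fintype.mem_piFinset.mp (Finset.mem_filter.mp ha).1) j
    rwa [hj] at this

end Box

lemma sum_le_of_majority {ι : Type*} {s : Finset ι} (p : ι → Prop) [DecidablePred p]
    {f : ι → ℝ} {c Q ε : ℝ} (hc : 0 ≤ c) (hQ : 0 ≤ Q)
    (hmaj : (1 - ε) * s.card < (s.filter p).card)
    (hf : ∀ b ∈ s, f b ≤ Q) (hfp : ∀ b ∈ s, p b → f b ≤ c) :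
    ∑ b ∈ s, f b ≤ s.card * c + ε * s.card * Q := by
  have hsplit := Finset.card_filter_add_card_filter_not (s := s) p
  rw [← Finset.sum_filter_add_sum_filter_not s p]
  gcongr
  · calc ∑ b ∈ s.filter p, f b ≤ ∑ _b ∈ s.filter p, c :=
          Finset.sum_le_sum fun b hb => (Finset.mem_filter.mp hb).elim (hfp b)
      _ ≤ s.card * c := by
          rw [Finset.sum_const, nsmul_eq_mul]
          exact mul_le_mul_of_nonneg_right (by exact_mod_cast Finset.card_filter_le s p) hc
  · calc ∑ b ∈ s.filter (¬p ·), f b ≤ ∑ _b ∈ s.filter (¬p ·), Q :=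
          Finset.sum_le_sum fun b hb => hf b (Finset.mem_filter.mp hb).1
      _ ≤ ε * s.card * Q := by
          rw [Finset.sum_const, nsmul_eq_mul]
          refine mul_le_mul_of_nonneg_right ?_ hQ
          have : ((s.filter (¬p ·)).card : ℝ) = s.card - (s.filter p).card := by
            rw [← hsplit]; push_cast; ring
          linarith

section Poll

variable {M : Type*} [Fintype M] [DecidableEq M] {ε : ℝ} {n : ℕ} {R : (Fin n → M) → Bool}

lemma exists_eq_inl_of_pollAux_nil_eq_ofBool {A : Fin n → Arg M} {v : Bool}
    (h : pollAux ε R [] A = TV.ofBool v) : ∃ f : Fin n → M, (∀ i, A i = .inl (f i)) ∧ R f = v := by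
  rw [pollAux] at h
  split_ifs at h with hA hR <;> cases v <;> cases h
  exacts [⟨_, Classical.choose_spec hA, hR⟩, ⟨_, Classical.choose_spec hA, by simpa using hR⟩]

lemma exists_majority_of_pollAux_cons_eq_ofBool {j : Fin n} {rest : List (Fin n)}
    {A : Fin n → Arg M} {v : Bool} (h : pollAux ε R (j :: rest) A = TV.ofBool v) :
    ∃ Aj : Finset M, A j = .inr Aj ∧ (1 - ε) * Aj.card <
      (Aj.filter fun a => pollAux ε R rest (Function.update A j (.inl a)) = TV.ofBool v).card := by
  rw [pollAux] at h
  rcases hA : A j with b | Aj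
  · rw [hA] at h; cases v <;> cases h
  · rw [hA] at h
    dsimp only at h
    refine ⟨Aj, rfl, ?_⟩
    split_ifs at h with htop hbot <;> cases v <;> cases h
    exacts [htop, hbot]

theorem card_filter_box_ne_le_of_pollAux_eq (hε : 0 ≤ ε) (l : List (Fin n)) (A : Fin n → Arg M)
    (v : Bool) (h : pollAux ε R l A = TV.ofBool v) :
    (((box A).filter fun a => R a ≠ v).card : ℝ) ≤ l.length * ε * (box A).card := by
  induction l generalizing A with
  | nil =>
    obtain ⟨f, hA, hf⟩ := exists_eq_inl_of_pollAux_nil_eq_ofBool h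
    have hbox : ∀ a ∈ box A, a = f := fun a ha => funext fun i => by
      simpa [box, hA, Arg.toFinset] using Fintype.mem_piFinset.mp ha i
    rw [Finset.filter_false_of_mem fun a ha => by rw [hbox a ha, hf]; exact not_not_intro rfl]
    simp
  | cons j rest ih =>
    obtain ⟨Aj, hAj, hmaj⟩ := exists_majority_of_pollAux_cons_eq_ofBool h
    obtain ⟨Q, hQ⟩ : ∃ Q, ∏ i ∈ Finset.univ.erase j, (A i).toFinset.card = Q := ⟨_, rfl⟩
    have hbox : ∀ b, (box (Function.update A j (.inl b))).card = Q := fun b =>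
      (card_box_update_inl A j b).trans hQ
    rw [card_filter_box_eq_sum hAj, card_box_of_eq_inr hAj, hQ]
    push_cast
    calc ∑ b ∈ Aj, (((box (Function.update A j (.inl b))).filter fun a => R a ≠ v).card : ℝ)
        ≤ Aj.card * (rest.length * ε * Q) + ε * Aj.card * Q := by
          refine sum_le_of_majority _ (by positivity) (by positivity) hmaj (fun b _ => ?_)
            (fun b _ hb => ?_)
          · rw [← hbox b]
            exact_mod_cast Finset.card_filter_le _ _
          · simpa [hbox] using ih _ hb
      _ = (rest.length + 1) * ε * (Aj.card * Q) := by ring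
      _ = _ := by simp

lemma pollAux_finRange_ne_up_of_isGood (R : (Fin n → M) → Bool) (p : Fin n → Finset M)
    (hp : ∀ i, IsGood ε R n (.inr (p i))) :
    pollAux ε R (List.finRange n) (fun i => .inr (p i)) ≠ TV.up := by
  cases n with
  | zero =>
    rw [List.finRange_zero, pollAux, dif_pos ⟨Fin.elim0, fun i => i.elim0⟩]
    split_ifs <;> simp
  | succ m =>
    have h0 := hp 0
    rw [IsGood] at h0
    have hlower : ∀ i : Fin (m + 1), 1 ≤ (i : ℕ) → IsGood ε R (m + 1 - i) (.inr (p i)) :=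
      fun i hi => by
        have hpi := hp i
        rw [IsGood] at hpi
        exact hpi.1 _ (by omega) (by omega)
    simpa [pollValue, List.take_of_length_le] using
      h0.2 (fun i => .inr (p i)) (Equiv.refl _) (fun i hi => by rw [show i = 0 from Fin.ext hi])
      (fun i hi _ => ⟨rfl, hlower i hi⟩) (fun i hi => absurd i.isLt (by omega))

end Poll

lemma IsPartition.eq_of_mem {V : Type*} [DecidableEq V] {P : Finset (Finset V)} {S : Finset V}
    (hP : IsPartition P S) {p q : Finset V} (hp : p ∈ P) (hq : q ∈ P) {x : V} (hxp : x ∈ p)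
    (hxq : x ∈ q) : p = q := by
  by_contra hne
  exact Finset.disjoint_left.mp (hP.2.1 p hp q hq hne) hxp hxq

theorem statement3_general {L : RelLanguage} {M : Type} [Fintype M] [DecidableEq M]
    (𝓜 : RelStructure L M)
    (ε : ℝ) (hε0 : 0 < ε)
    (P : Finset (Finset M)) (hP : IsPartition P Finset.univ)
    (hexc : ∀ p ∈ P, IsExcellent ε 𝓜 (Sum.inr p))
    (E : L.Symb) :
    ∃ Estar : (Fin (L.arity E) → M) → Bool,
      (∀ p : Fin (L.arity E) → Finset M, (∀ i, p i ∈ P) →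
        ((Finset.univ.filter fun a : Fin (L.arity E) → M =>
            (∀ i, a i ∈ p i) ∧ 𝓜.rel E a ≠ Estar a).card : ℝ) ≤
          (L.arity E : ℝ) * ε * ∏ i, ((p i).card : ℝ)) ∧
      IndivisibleRel P Estar := by
  choose part hpartP hmem using fun x => (hP.2.2 x).1 (Finset.mem_univ x)
  have part_comp : ∀ p : Fin (L.arity E) → Finset M, (∀ i, p i ∈ P) →
      ∀ a : Fin (L.arity E) → M, (∀ i, a i ∈ p i) → (fun i => part (a i)) = p :=
    fun p hp a ha => funext fun i => hP.eq_of_mem (hpartP _) (hp i) (hmem _) (ha i)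
  let poll (p : Fin (L.arity E) → Finset M) : TV :=
    pollAux ε (𝓜.rel E) (List.finRange _) fun i => .inr (p i)
  refine ⟨fun a => decide (poll (fun i => part (a i)) = .top), fun p hp => ?_,
    fun p hp a b ha hb => by simp only [part_comp p hp a ha, part_comp p hp b hb]⟩
  obtain ⟨v, hv⟩ := TV.exists_ofBool_eq
    (pollAux_finRange_ne_up_of_isGood _ p fun i => hexc _ (hp i) E)
  have hcount := card_filter_box_ne_le_of_pollAux_eq hε0.le _ _ v hv.symm
  simp only [List.length_finRange, box, Arg.toFinset, Fintype.card_piFinset] at hcount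
  push_cast at hcount
  convert hcount using 3
  ext a
  simp only [Finset.mem_filter, Finset.mem_univ, true_and, Fintype.mem_piFinset]
  refine and_congr_right fun ha => ?_
  simp only [poll, part_comp p hp a ha, ← hv, TV.decide_ofBool_eq_top]

/-- Proposition: changes in edges due to excellence needed to get
indivisible. If `P` is an equitable partition of `𝓜` into ε-excellent parts and
`E ∈ 𝓛` has arity `n`, then there is an `n`-ary relation `E*` on `M` such that for
all tuples `⟨p_i⟩_{i<n}` of parts, `|(E Δ E*) ∩ ∏_{i<n} p_i| ≤ n·ε·∏_{i<n}|p_i|`,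
and `P` is an indivisible partition of `(M, E*)`. -/
theorem statement3 {L : RelLanguage} {M : Type} [Fintype M] [DecidableEq M]
    (𝓜 : RelStructure L M)
    (ε : ℝ) (hε0 : 0 < ε) (hε : ε < 1 / 4)
    (P : Finset (Finset M)) (hP : IsPartition P Finset.univ) (heq : IsEquitable P)
    (hexc : ∀ p ∈ P, IsExcellent ε 𝓜 (Sum.inr p))
    (E : L.Symb) :
    ∃ Estar : (Fin (L.arity E) → M) → Bool,
      (∀ p : Fin (L.arity E) → Finset M, (∀ i, p i ∈ P) →
        ((Finset.univ.filter fun a : Fin (L.arity E) → M =>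
            (∀ i, a i ∈ p i) ∧ 𝓜.rel E a ≠ Estar a).card : ℝ) ≤
          (L.arity E : ℝ) * ε * ∏ i, ((p i).card : ℝ)) ∧
      IndivisibleRel P Estar :=
  statement3_general 𝓜 ε hε0 P hP hexc E
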